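/- Let J be the Choi matrix of a quantum channel from a finite-dimensional system A to a finite-dimensional system B, and let r ≥ 0. Define, for each integer n ≥ 1, a_n := −(1/n)·log suc^NS(J^{(n)}, e^{n·r}) and b_n := −(1/n)·log suc^MC(J^{(n)}, e^{n·r}). Then limsup_{n→∞} a_n = limsup_{n→∞} b_n and liminf_{n→∞} a_n = liminf_{n→∞} b_n; in particular the non-signaling and meta-converse strong converse exponents coincide. -/

import Mathlib

open Matrix Kronecker Filter ComplexOrder

namespace QCoding

/-- Partial trace over the first tensor factor. -/
noncomputable def trFst {R B : Type*} [Fintype R]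
    (Λ : Matrix (R × B) (R × B) ℂ) : Matrix B B ℂ :=
  fun b b' => ∑ r, Λ (r, b) (r, b')

/-- Partial trace over the second tensor factor. -/
noncomputable def trSnd {R B : Type*} [Fintype B]
    (Λ : Matrix (R × B) (R × B) ℂ) : Matrix R R ℂ :=
  fun r r' => ∑ b, Λ (r, b) (r', b)

/-- A quantum state: positive semidefinite with unit trace. -/
def IsState {n : Type*} [Fintype n] (ρ : Matrix n n ℂ) : Prop :=
  ρ.PosSemidef ∧ ρ.trace = 1

/-- A Choi matrix of a quantum channel: positive semidefinite with
partial trace over the output system equal to the identity. -/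
def IsChoi {A B : Type*} [Fintype A] [Fintype B] [DecidableEq A]
    (J : Matrix (A × B) (A × B) ℂ) : Prop :=
  J.PosSemidef ∧ trSnd J = 1

/-- The non-signaling success probability: supremum of `(1/M) Tr[Λ J]` over states `ρ`
and `Λ` with `0 ≼ Λ ≼ M (ρ ⊗ I_B)` and `Tr_R Λ = I_B`. -/
noncomputable def sucNS {A B : Type*} [Fintype A] [Fintype B] [DecidableEq B]
    (J : Matrix (A × B) (A × B) ℂ) (M : ℝ) : ℝ :=
  sSup {x | ∃ ρ : Matrix A A ℂ, ∃ Λ : Matrix (A × B) (A × B) ℂ,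
    IsState ρ ∧ Λ.PosSemidef ∧
    ((M : ℂ) • (ρ ⊗ₖ (1 : Matrix B B ℂ)) - Λ).PosSemidef ∧
    trFst Λ = 1 ∧ x = (1 / M) * (Λ * J).trace.re}

/-- The meta-converse success probability: as `sucNS` but with `Tr_R Λ ≼ I_B`. -/
noncomputable def sucMC {A B : Type*} [Fintype A] [Fintype B] [DecidableEq B]
    (J : Matrix (A × B) (A × B) ℂ) (M : ℝ) : ℝ :=
  sSup {x | ∃ ρ : Matrix A A ℂ, ∃ Λ : Matrix (A × B) (A × B) ℂ,
    IsState ρ ∧ Λ.PosSemidef ∧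
    ((M : ℂ) • (ρ ⊗ₖ (1 : Matrix B B ℂ)) - Λ).PosSemidef ∧
    ((1 : Matrix B B ℂ) - trFst Λ).PosSemidef ∧
    x = (1 / M) * (Λ * J).trace.re}

/-- The fixed-input non-signaling success probability: supremum of `Tr[Λ J]` over `Λ`
with `0 ≼ Λ ≼ ρ ⊗ I_B` and `Tr_R Λ = (1/M) I_B`. -/
noncomputable def sucNSFixed {A B : Type*} [Fintype A] [Fintype B] [DecidableEq B]
    (J : Matrix (A × B) (A × B) ℂ) (M : ℝ) (ρ : Matrix A A ℂ) : ℝ :=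
  sSup {x | ∃ Λ : Matrix (A × B) (A × B) ℂ, Λ.PosSemidef ∧
    ((ρ ⊗ₖ (1 : Matrix B B ℂ)) - Λ).PosSemidef ∧
    trFst Λ = ((1 / M : ℂ)) • (1 : Matrix B B ℂ) ∧
    x = (Λ * J).trace.re}

/-- Apply a real function spectrally to a Hermitian matrix (junk value `0` otherwise). -/
noncomputable def hermApply {n : Type*} [Fintype n] [DecidableEq n]
    (H : Matrix n n ℂ) (f : ℝ → ℝ) : Matrix n n ℂ :=
  if h : H.IsHermitian then
    (h.eigenvectorUnitary : Matrix n n ℂ) *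
      Matrix.diagonal (fun i => (f (h.eigenvalues i) : ℂ)) *
      (star (h.eigenvectorUnitary : Matrix n n ℂ))
  else 0

/-- Real (spectral) power of a positive semidefinite matrix, with the Moore-Penrose
convention: for `p ≠ 0` the eigenvalue `0` is mapped to `(0:ℝ) ^ p = 0`.
In particular `matRPow ρ (1/2)` is the positive semidefinite square root of `ρ` and
`matRPow ρ (-(1/2))` is the Moore-Penrose pseudo-inverse of that square root. -/
noncomputable def matRPow {n : Type*} [Fintype n] [DecidableEq n]
    (H : Matrix n n ℂ) (p : ℝ) : Matrix n n ℂ :=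
  hermApply H (fun x => x ^ p)

/-- Positive part of a Hermitian matrix: each eigenvalue `λ` is replaced by `max λ 0`. -/
noncomputable def posPart {n : Type*} [Fintype n] [DecidableEq n]
    (H : Matrix n n ℂ) : Matrix n n ℂ :=
  hermApply H (fun x => max x 0)

/-- Support inclusion for positive semidefinite matrices: the kernel of `σ` is
contained in the kernel of `ρ`, i.e. the support of `ρ` is contained in that of `σ`. -/
def SuppLe {n : Type*} [Fintype n] (ρ σ : Matrix n n ℂ) : Prop :=
  ∀ v : n → ℂ, σ.mulVec v = 0 → ρ.mulVec v = 0

/-- The sandwiched Rényi divergence of order `α` (finite-value formula, meaningful when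
the support of `ρ` is contained in that of `σ`). -/
noncomputable def sandDiv {n : Type*} [Fintype n] [DecidableEq n]
    (α : ℝ) (ρ σ : Matrix n n ℂ) : ℝ :=
  (α - 1)⁻¹ * Real.log
    ((matRPow (matRPow σ ((1 - α) / (2 * α)) * ρ * matRPow σ ((1 - α) / (2 * α))) α).trace.re)

/-- The channel's sandwiched Rényi mutual information of order `α`:
`sup_ρ inf_σ D̃_α((ρ^{1/2} ⊗ I_B) J (ρ^{1/2} ⊗ I_B) ‖ ρ ⊗ σ)`, the infimum being
restricted to those `σ` for which the support condition holds (the divergence is `+∞`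
otherwise, so such `σ` never contribute to the infimum). -/
noncomputable def sandMI {A B : Type*} [Fintype A] [Fintype B] [DecidableEq A] [DecidableEq B]
    (α : ℝ) (J : Matrix (A × B) (A × B) ℂ) : ℝ :=
  sSup {x | ∃ ρ : Matrix A A ℂ, IsState ρ ∧
    x = sInf {y | ∃ σ : Matrix B B ℂ, IsState σ ∧
      SuppLe ((matRPow ρ (1/2) ⊗ₖ (1 : Matrix B B ℂ)) * J *
          (matRPow ρ (1/2) ⊗ₖ (1 : Matrix B B ℂ))) (ρ ⊗ₖ σ) ∧
      y = sandDiv α ((matRPow ρ (1/2) ⊗ₖ (1 : Matrix B B ℂ)) * J *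
          (matRPow ρ (1/2) ⊗ₖ (1 : Matrix B B ℂ))) (ρ ⊗ₖ σ)}}

/-- Choi matrix of the `n`-fold tensor power channel. -/
noncomputable def choiPow {A B : Type*} (J : Matrix (A × B) (A × B) ℂ) (n : ℕ) :
    Matrix ((Fin n → A) × (Fin n → B)) ((Fin n → A) × (Fin n → B)) ℂ :=
  fun p q => ∏ k : Fin n, J (p.1 k, p.2 k) (q.1 k, q.2 k)

/-- Action of the channel with Choi matrix `C` (from `S` to `T`) on the first tensor
factor of a bipartite matrix on `S × E`. -/
noncomputable def chanApply {S T E : Type*} [Fintype S]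
    (C : Matrix (S × T) (S × T) ℂ) (X : Matrix (S × E) (S × E) ℂ) :
    Matrix (T × E) (T × E) ℂ :=
  fun p q => ∑ s : S, ∑ s' : S, C (s, p.1) (s', q.1) * X (s, p.2) (s', q.2)

/-- The entanglement-assisted success probability for `M` messages: supremum over a
shared pure entangled state `ψ` on `Fin d × Fin d`, encoding channels `K m` from `E_A`
to `A` (Choi matrices), and a POVM `Ξ` on `B × E_B`, of the average probability of
correct decoding. -/
noncomputable def sucEA {A B : Type*} [Fintype A] [Fintype B] [DecidableEq B]
    (J : Matrix (A × B) (A × B) ℂ) (M : ℕ) : ℝ :=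
  sSup {x | ∃ d : ℕ, 1 ≤ d ∧
    ∃ ψ : Fin d × Fin d → ℂ, (∑ i, Complex.normSq (ψ i)) = 1 ∧
    ∃ K : Fin M → Matrix (Fin d × A) (Fin d × A) ℂ,
      (∀ m, (K m).PosSemidef ∧ trSnd (K m) = 1) ∧
    ∃ Ξ : Fin M → Matrix (B × Fin d) (B × Fin d) ℂ,
      (∀ m, (Ξ m).PosSemidef) ∧ (∑ m, Ξ m) = 1 ∧
      x = (1 / (M : ℝ)) *
        ∑ m, ((Ξ m) * chanApply J (chanApply (K m) (Matrix.vecMulVec ψ (star ψ)))).trace.re}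

/-!
Any meta-converse feasible pair `(ρ, Λ)` with `T = Tr_R Λ ≼ I` can be repaired into a
non-signaling feasible one, `Λ' = c Λ + ρ ⊗ (I - c T)` with `c = 1 - 1/M`, whose value is at
least `c` times the old one. Together with the trivial code `Λ = ρ ⊗ I` (value `1/M`) this gives
`(1 - 1/M) suc^MC ≤ suc^NS ≤ suc^MC ≤ 1` and `1/M ≤ suc^NS`. For `M = e^{nr}` the two exponents
therefore differ by at most `-(1/n) log (1 - e^{-nr}) → 0` (they coincide when `r = 0`), and both
lie in `[0, r]`.
-/

lemma _root_.Matrix.PosSemidef.re_trace_mul_nonneg {n : Type*} [Fintype n] {X Y : Matrix n n ℂ}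
    (hX : X.PosSemidef) (hY : Y.PosSemidef) : 0 ≤ (X * Y).trace.re := by
  classical
  open scoped MatrixOrder in
  obtain ⟨C, rfl⟩ := CStarAlgebra.nonneg_iff_eq_star_mul_self.mp hX.nonneg
  rw [star_eq_conjTranspose, Matrix.mul_assoc, trace_mul_comm]
  exact (Complex.nonneg_iff.mp (hY.mul_mul_conjTranspose_same C).trace_nonneg).1

lemma _root_.Matrix.PosSemidef.ofReal_smul {n : Type*} [Fintype n] {X : Matrix n n ℂ}
    (hX : X.PosSemidef) {c : ℝ} (hc : 0 ≤ c) : ((c : ℂ) • X).PosSemidef :=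
  hX.smul (Complex.zero_le_real.mpr hc)

lemma kronecker_sub_right {l m n p : Type*} (X : Matrix l m ℂ) (Y Z : Matrix n p ℂ) :
    X ⊗ₖ (Y - Z) = X ⊗ₖ Y - X ⊗ₖ Z := by
  ext ⟨a, b⟩ ⟨c, d⟩
  simp [mul_sub]

section PartialTrace

variable {R B : Type*} [Fintype R]

lemma trFst_add (X Y : Matrix (R × B) (R × B) ℂ) : trFst (X + Y) = trFst X + trFst Y := by
  ext b b'
  simp [trFst, Finset.sum_add_distrib]

lemma trFst_smul (c : ℂ) (X : Matrix (R × B) (R × B) ℂ) : trFst (c • X) = c • trFst X := by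
  ext b b'
  simp [trFst, Finset.mul_sum]

lemma trFst_kronecker (ρ : Matrix R R ℂ) (X : Matrix B B ℂ) : trFst (ρ ⊗ₖ X) = ρ.trace • X := by
  ext b b'
  simp [trFst, Matrix.trace, Finset.sum_mul]

lemma trFst_eq_sum_submatrix (Λ : Matrix (R × B) (R × B) ℂ) :
    trFst Λ = ∑ r, Λ.submatrix (fun b => (r, b)) (fun b => (r, b)) := by
  ext b b'
  simp [trFst, Matrix.sum_apply]

lemma _root_.Matrix.PosSemidef.trFst {Λ : Matrix (R × B) (R × B) ℂ} (hΛ : Λ.PosSemidef) :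
    (trFst Λ).PosSemidef := by
  rw [trFst_eq_sum_submatrix]
  exact posSemidef_sum _ fun r _ => hΛ.submatrix _

lemma trace_kronecker_one_mul [Fintype B] [DecidableEq B] (ρ : Matrix R R ℂ)
    (J : Matrix (R × B) (R × B) ℂ) :
    ((ρ ⊗ₖ (1 : Matrix B B ℂ)) * J).trace = (ρ * trSnd J).trace := by
  simp only [Matrix.trace, Matrix.diag, Matrix.mul_apply, Fintype.sum_prod_type,
    kroneckerMap_apply, Matrix.one_apply, mul_ite, mul_one, mul_zero, ite_mul, zero_mul,
    Finset.sum_ite_eq, Finset.mem_univ, if_true, trSnd, Finset.mul_sum]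
  exact Finset.sum_congr rfl fun a _ => Finset.sum_comm

end PartialTrace

section ChoiPow

variable {A B : Type*} [Fintype B] {J : Matrix (A × B) (A × B) ℂ}

lemma posSemidef_choiPow [Fintype A] (hJ : J.PosSemidef) (n : ℕ) :
    (choiPow J n).PosSemidef := by
  classical
  open scoped MatrixOrder in
  obtain ⟨C, hC⟩ := CStarAlgebra.nonneg_iff_eq_star_mul_self.mp hJ.nonneg
  let D : Matrix (Fin n → A × B) ((Fin n → A) × (Fin n → B)) ℂ :=
    fun s p => ∏ k, C (s k) (p.1 k, p.2 k)
  suffices choiPow J n = Dᴴ * D from this ▸ posSemidef_conjTranspose_mul_self D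
  ext p q
  simp only [choiPow, hC, star_eq_conjTranspose, Matrix.mul_apply, conjTranspose_apply]
  simp only [D, star_prod, ← Finset.prod_mul_distrib]
  exact Fintype.prod_sum fun k (y : A × B) => star (C y (p.1 k, p.2 k)) * C y (q.1 k, q.2 k)

lemma trSnd_choiPow [DecidableEq A] (hJ : trSnd J = 1) (n : ℕ) : trSnd (choiPow J n) = 1 := by
  ext p q
  have : trSnd (choiPow J n) p q = ∏ k, trSnd J (p k) (q k) :=
    (Fintype.prod_sum fun k (y : B) => J (p k, y) (q k, y)).symm
  simp [this, hJ, Matrix.one_apply, Finset.prod_boole, funext_iff]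

lemma IsChoi.choiPow [Fintype A] [DecidableEq A] (hJ : IsChoi J) (n : ℕ) :
    IsChoi (choiPow J n) :=
  ⟨posSemidef_choiPow hJ.1 n, trSnd_choiPow hJ.2 n⟩

end ChoiPow

section SuccessProbabilities

variable {A B : Type*} [Fintype A] [Fintype B] [DecidableEq B] {J : Matrix (A × B) (A × B) ℂ}
  {M : ℝ}

def nsValues (J : Matrix (A × B) (A × B) ℂ) (M : ℝ) : Set ℝ :=
  {x | ∃ ρ : Matrix A A ℂ, ∃ Λ : Matrix (A × B) (A × B) ℂ,
    IsState ρ ∧ Λ.PosSemidef ∧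
    ((M : ℂ) • (ρ ⊗ₖ (1 : Matrix B B ℂ)) - Λ).PosSemidef ∧
    trFst Λ = 1 ∧ x = (1 / M) * (Λ * J).trace.re}

def mcValues (J : Matrix (A × B) (A × B) ℂ) (M : ℝ) : Set ℝ :=
  {x | ∃ ρ : Matrix A A ℂ, ∃ Λ : Matrix (A × B) (A × B) ℂ,
    IsState ρ ∧ Λ.PosSemidef ∧
    ((M : ℂ) • (ρ ⊗ₖ (1 : Matrix B B ℂ)) - Λ).PosSemidef ∧
    ((1 : Matrix B B ℂ) - trFst Λ).PosSemidef ∧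
    x = (1 / M) * (Λ * J).trace.re}

lemma sucMC_eq_sSup : sucMC J M = sSup (mcValues J M) := rfl

lemma nsValues_subset_mcValues : nsValues J M ⊆ mcValues J M := by
  rintro x ⟨ρ, Λ, hρ, hΛ, hle, htr, rfl⟩
  exact ⟨ρ, Λ, hρ, hΛ, hle, by simpa [htr] using PosSemidef.zero, rfl⟩

variable [DecidableEq A]

lemma IsChoi.trace_kronecker_one_mul (hJ : IsChoi J) {ρ : Matrix A A ℂ} (hρ : IsState ρ) :
    ((ρ ⊗ₖ (1 : Matrix B B ℂ)) * J).trace = 1 := by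
  rw [QCoding.trace_kronecker_one_mul, hJ.2, Matrix.mul_one, hρ.2]

lemma IsChoi.re_trace_mul_le (hJ : IsChoi J) {ρ : Matrix A A ℂ} {Λ : Matrix (A × B) (A × B) ℂ}
    (hρ : IsState ρ) (hΛ : ((M : ℂ) • (ρ ⊗ₖ (1 : Matrix B B ℂ)) - Λ).PosSemidef) :
    (Λ * J).trace.re ≤ M := by
  have := hΛ.re_trace_mul_nonneg hJ.1
  rw [Matrix.sub_mul, trace_sub, smul_mul, trace_smul, hJ.trace_kronecker_one_mul hρ] at this
  simpa using this

lemma IsChoi.le_one_of_mem_mcValues (hJ : IsChoi J) (hM : 0 < M) {x : ℝ}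
    (hx : x ∈ mcValues J M) : x ≤ 1 := by
  obtain ⟨ρ, Λ, hρ, -, hle, -, rfl⟩ := hx
  rw [one_div_mul_eq_div, div_le_one hM]
  exact hJ.re_trace_mul_le hρ hle

lemma isState_uniform [Nonempty A] :
    IsState ((Fintype.card A : ℂ)⁻¹ • (1 : Matrix A A ℂ)) := by
  refine ⟨PosSemidef.one.smul (by positivity), ?_⟩
  have : (Fintype.card A : ℂ) ≠ 0 := Nat.cast_ne_zero.mpr Fintype.card_ne_zero
  simp [trace_one, this]

lemma IsChoi.inv_mem_nsValues [Nonempty A] (hJ : IsChoi J) (hM : 1 ≤ M) :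
    M⁻¹ ∈ nsValues J M := by
  set ρ : Matrix A A ℂ := (Fintype.card A : ℂ)⁻¹ • 1
  have hρ : IsState ρ := isState_uniform
  have hK := hρ.1.kronecker (PosSemidef.one (n := B) (R := ℂ))
  refine ⟨ρ, ρ ⊗ₖ 1, hρ, hK, ?_, ?_, ?_⟩
  · have : (M : ℂ) • (ρ ⊗ₖ (1 : Matrix B B ℂ)) - ρ ⊗ₖ 1 = ((M - 1 : ℝ) : ℂ) • (ρ ⊗ₖ 1) := by
      push_cast
      module
    rw [this]
    exact hK.ofReal_smul (by linarith)
  · rw [trFst_kronecker, hρ.2, one_smul]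
  · rw [hJ.trace_kronecker_one_mul hρ]
    simp

/-- `Λ' = c Λ + ρ ⊗ (I - c Tr_R Λ)` with `c = 1 - M⁻¹` has `Tr_R Λ' = I`, and
`Λ' ≼ M (ρ ⊗ I)` because `c M = M - 1`. -/
lemma IsChoi.exists_mem_nsValues_ge (hJ : IsChoi J) (hM : 1 ≤ M) {x : ℝ}
    (hx : x ∈ mcValues J M) : ∃ y ∈ nsValues J M, (1 - M⁻¹) * x ≤ y := by
  obtain ⟨ρ, Λ, hρ, hΛ, hle, hT, rfl⟩ := hx
  set c : ℝ := 1 - M⁻¹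
  have hc : 0 ≤ c := sub_nonneg.mpr (inv_le_one_of_one_le₀ hM)
  have hcM : (c : ℂ) * M = M - 1 := by
    have : (M : ℂ) ≠ 0 := Complex.ofReal_ne_zero.mpr (by linarith)
    simp only [c]
    push_cast
    field_simp
  set T := trFst Λ
  have hcT : ((1 : Matrix B B ℂ) - (c : ℂ) • T).PosSemidef := by
    have : (1 : Matrix B B ℂ) - (c : ℂ) • T = (c : ℂ) • (1 - T) + ((M⁻¹ : ℝ) : ℂ) • 1 := by
      simp only [c]
      push_cast
      module
    rw [this]
    exact (hT.ofReal_smul hc).add (PosSemidef.one.ofReal_smul (by positivity))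
  set R := ρ ⊗ₖ ((1 : Matrix B B ℂ) - (c : ℂ) • T)
  have hR : R.PosSemidef := hρ.1.kronecker hcT
  refine ⟨_, ⟨ρ, (c : ℂ) • Λ + R, hρ, (hΛ.ofReal_smul hc).add hR, ?_, ?_, rfl⟩, ?_⟩
  · have : (M : ℂ) • (ρ ⊗ₖ (1 : Matrix B B ℂ)) - ((c : ℂ) • Λ + R)
        = (c : ℂ) • ((M : ℂ) • (ρ ⊗ₖ 1) - Λ) + (c : ℂ) • (ρ ⊗ₖ T) := by
      rw [show R = _ from kronecker_sub_right ρ 1 _, kronecker_smul, smul_sub, smul_smul, hcM]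
      module
    rw [this]
    exact (hle.ofReal_smul hc).add ((hρ.1.kronecker hΛ.trFst).ofReal_smul hc)
  · rw [trFst_add, trFst_smul, trFst_kronecker, hρ.2, one_smul, add_sub_cancel]
  · have hRJ := hR.re_trace_mul_nonneg hJ.1
    rw [Matrix.add_mul, trace_add, smul_mul, trace_smul, smul_eq_mul, Complex.add_re,
      Complex.re_ofReal_mul]
    have hM0 : 0 ≤ 1 / M := by positivity
    nlinarith [mul_nonneg hM0 hRJ]

lemma IsChoi.bddAbove_mcValues (hJ : IsChoi J) (hM : 0 < M) : BddAbove (mcValues J M) :=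
  ⟨1, fun _ hx => hJ.le_one_of_mem_mcValues hM hx⟩

lemma IsChoi.bddAbove_nsValues (hJ : IsChoi J) (hM : 0 < M) : BddAbove (nsValues J M) :=
  (hJ.bddAbove_mcValues hM).mono nsValues_subset_mcValues

lemma IsChoi.sucMC_le_one (hJ : IsChoi J) (hM : 0 < M) : sucMC J M ≤ 1 :=
  Real.sSup_le (fun _ hx => hJ.le_one_of_mem_mcValues hM hx) zero_le_one

variable [Nonempty A]

lemma IsChoi.inv_le_sucNS (hJ : IsChoi J) (hM : 1 ≤ M) : M⁻¹ ≤ sucNS J M :=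
  le_csSup (hJ.bddAbove_nsValues (by linarith)) (hJ.inv_mem_nsValues hM)

lemma IsChoi.sucNS_le_sucMC (hJ : IsChoi J) (hM : 1 ≤ M) : sucNS J M ≤ sucMC J M :=
  csSup_le_csSup (hJ.bddAbove_mcValues (by linarith)) ⟨_, hJ.inv_mem_nsValues hM⟩
    nsValues_subset_mcValues

lemma IsChoi.one_sub_inv_mul_sucMC_le_sucNS (hJ : IsChoi J) (hM : 1 ≤ M) :
    (1 - M⁻¹) * sucMC J M ≤ sucNS J M := by
  have hc : 0 ≤ 1 - M⁻¹ := sub_nonneg.mpr (inv_le_one_of_one_le₀ hM)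
  rw [sucMC_eq_sSup, ← smul_eq_mul, ← Real.sSup_smul_of_nonneg hc]
  refine Real.sSup_le ?_ ((inv_nonneg.mpr (by linarith)).trans (hJ.inv_le_sucNS hM))
  rintro _ ⟨x, hx, rfl⟩
  obtain ⟨y, hy, hxy⟩ := hJ.exists_mem_nsValues_ge hM hx
  exact hxy.trans (le_csSup (hJ.bddAbove_nsValues (by linarith)) hy)

end SuccessProbabilities

section Exponents

open Real Topology

lemma limsup_eq_and_liminf_eq_of_tendsto_sub {ι : Type*} {F : Filter ι} [F.NeBot] {f g : ι → ℝ}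
    (hg_le : IsBoundedUnder (· ≤ ·) F g) (hg_ge : IsBoundedUnder (· ≥ ·) F g)
    (hfg : Tendsto (f - g) F (𝓝 0)) :
    limsup f F = limsup g F ∧ liminf f F = liminf g F := by
  set v := f - g
  have hf : f = g + v := (add_sub_cancel g f).symm
  have hv_le : IsBoundedUnder (· ≤ ·) F v := hfg.isBoundedUnder_le
  have hv_ge : IsBoundedUnder (· ≥ ·) F v := hfg.isBoundedUnder_ge
  rw [hf]
  constructor
  · apply le_antisymm
    · calc limsup (g + v) F ≤ limsup g F + limsup v F :=
            limsup_add_le hg_ge hg_le hv_ge.isCoboundedUnder_le hv_le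
        _ = limsup g F := by rw [hfg.limsup_eq, add_zero]
    · calc limsup g F = limsup g F + liminf v F := by rw [hfg.liminf_eq, add_zero]
        _ ≤ limsup (g + v) F := le_limsup_add hg_le hg_ge.isCoboundedUnder_le hv_le hv_ge
  · apply le_antisymm
    · calc liminf (g + v) F = liminf (v + g) F := by rw [add_comm]
        _ ≤ limsup v F + liminf g F :=
            liminf_add_le hv_ge hv_le hg_ge hg_le.isCoboundedUnder_ge
        _ = liminf g F := by rw [hfg.limsup_eq, zero_add]
    · calc liminf g F = liminf g F + liminf v F := by rw [hfg.liminf_eq, add_zero]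
        _ ≤ liminf (g + v) F := le_liminf_add hg_ge hg_le hv_ge hv_le.isCoboundedUnder_ge

lemma neg_one_div_mul_log_mem_Icc {r x : ℝ} (hr : 0 ≤ r) (n : ℕ) (hlo : (exp (n * r))⁻¹ ≤ x)
    (hhi : x ≤ 1) : -(1 / (n : ℝ)) * log x ∈ Set.Icc 0 r := by
  rcases n.eq_zero_or_pos with rfl | hn
  · simpa using hr
  have hn' : (0 : ℝ) < n := Nat.cast_pos.mpr hn
  have hx : 0 < x := (inv_pos.mpr (exp_pos _)).trans_le hlo
  have hlog : -(n * r) ≤ log x := by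
    simpa using log_le_log (inv_pos.mpr (exp_pos _)) hlo
  constructor
  · exact mul_nonneg_of_nonpos_of_nonpos (by simp) (log_nonpos hx.le hhi)
  · calc -(1 / (n : ℝ)) * log x ≤ -(1 / (n : ℝ)) * -(n * r) :=
          mul_le_mul_of_nonpos_left hlog (by simp)
      _ = r := by field_simp

lemma neg_one_div_mul_log_sub_mem_Icc {r x y : ℝ} (hr : 0 < r) (n : ℕ) (hx : 0 < x)
    (hxy : x ≤ y) (hyx : (1 - (exp (n * r))⁻¹) * y ≤ x) :
    -(1 / (n : ℝ)) * log x - -(1 / (n : ℝ)) * log y ∈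
      Set.Icc 0 (-log (1 - (exp (n * r))⁻¹)) := by
  have hy : 0 < y := hx.trans_le hxy
  have hlog : log x ≤ log y := log_le_log hx hxy
  rw [show -(1 / (n : ℝ)) * log x - -(1 / (n : ℝ)) * log y = 1 / n * (log y - log x) by ring]
  refine ⟨mul_nonneg (by positivity) (sub_nonneg.mpr hlog), ?_⟩
  rcases n.eq_zero_or_pos with rfl | hn
  · simp
  have hq : 0 < 1 - (exp (n * r))⁻¹ :=
    sub_pos.mpr (inv_lt_one_of_one_lt₀ (one_lt_exp_iff.mpr (by positivity)))
  have hqy := log_le_log (mul_pos hq hy) hyx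
  rw [log_mul hq.ne' hy.ne'] at hqy
  calc 1 / (n : ℝ) * (log y - log x) ≤ 1 * (log y - log x) :=
        mul_le_mul_of_nonneg_right (div_le_one_of_le₀ (by exact_mod_cast hn) (by positivity))
          (sub_nonneg.mpr hlog)
    _ ≤ -log (1 - (exp (n * r))⁻¹) := by linarith

lemma tendsto_neg_one_div_mul_log_sub {r : ℝ} (hr : 0 ≤ r) {s t : ℕ → ℝ}
    (hs : ∀ n : ℕ, (exp (n * r))⁻¹ ≤ s n) (hst : ∀ n, s n ≤ t n) (ht : ∀ n, t n ≤ 1)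
    (hts : ∀ n : ℕ, (1 - (exp (n * r))⁻¹) * t n ≤ s n) :
    Tendsto (fun n : ℕ => -(1 / (n : ℝ)) * log (s n) - -(1 / (n : ℝ)) * log (t n))
      atTop (𝓝 0) := by
  rcases hr.eq_or_lt with rfl | hr
  · have hst' : s = t := funext fun n =>
      le_antisymm (hst n) ((ht n).trans (by simpa using hs n))
    simp [hst']
  have hq : Tendsto (fun n : ℕ => 1 - (exp (n * r))⁻¹) atTop (𝓝 1) := by
    simpa using tendsto_const_nhds.sub
      (tendsto_exp_atTop.comp (tendsto_natCast_atTop_atTop.atTop_mul_const hr)).inv_tendsto_atTop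
  have hlog : Tendsto (fun n : ℕ => -log (1 - (exp (n * r))⁻¹)) atTop (𝓝 0) := by
    simpa using ((continuousAt_log one_ne_zero).tendsto.comp hq).neg
  have hgap n := neg_one_div_mul_log_sub_mem_Icc hr n
    ((inv_pos.mpr (exp_pos _)).trans_le (hs n)) (hst n) (hts n)
  exact squeeze_zero (fun n => (hgap n).1) (fun n => (hgap n).2) hlog

end Exponents

/-- The non-signaling and meta-converse strong converse exponents
coincide: the `limsup`s and `liminf`s of the respective exponent sequences agree. -/
theorem ns_mc_exponents_eq {A B : Type*} [Fintype A] [DecidableEq A] [Nonempty A]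
    [Fintype B] [DecidableEq B]
    (J : Matrix (A × B) (A × B) ℂ) (hJ : IsChoi J)
    (r : ℝ) (hr : 0 ≤ r) :
    limsup (fun n : ℕ =>
        -(1 / (n : ℝ)) * Real.log (sucNS (choiPow J n) (Real.exp (n * r)))) atTop =
      limsup (fun n : ℕ =>
        -(1 / (n : ℝ)) * Real.log (sucMC (choiPow J n) (Real.exp (n * r)))) atTop ∧
    liminf (fun n : ℕ =>
        -(1 / (n : ℝ)) * Real.log (sucNS (choiPow J n) (Real.exp (n * r)))) atTop =
      liminf (fun n : ℕ =>
        -(1 / (n : ℝ)) * Real.log (sucMC (choiPow J n) (Real.exp (n * r)))) atTop := by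
  have hM (n : ℕ) : 1 ≤ Real.exp (n * r) := Real.one_le_exp (by positivity)
  have hJn (n : ℕ) : IsChoi (choiPow J n) := hJ.choiPow n
  have hlo n := (hJn n).inv_le_sucNS (hM n)
  have hle n := (hJn n).sucNS_le_sucMC (hM n)
  have hup (n : ℕ) : sucMC (choiPow J n) (Real.exp (n * r)) ≤ 1 :=
    (hJn n).sucMC_le_one (Real.exp_pos _)
  have hexponent (n : ℕ) := neg_one_div_mul_log_mem_Icc hr n ((hlo n).trans (hle n)) (hup n)
  exact limsup_eq_and_liminf_eq_of_tendsto_sub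
    (isBoundedUnder_of ⟨r, fun n => (hexponent n).2⟩) (isBoundedUnder_of ⟨0, fun n => (hexponent n).1⟩)
    (tendsto_neg_one_div_mul_log_sub hr hlo hle hup fun n => (hJn n).one_sub_inv_mul_sucMC_le_sucNS (hM n))

end QCoding
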